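/- Let A be an antilattice po-group and G a directed po-group. Then the lexicographic product A ×⃗ G satisfies RDP if and only if both A and G satisfy RDP. -/

import Mathlib

/-- A po-group satisfies RDP if every equation `a₁ + a₂ = b₁ + b₂` of positive elements
admits a Riesz decomposition by four positive elements. -/
def RDP (G : Type*) [AddGroup G] [PartialOrder G] : Prop :=
  ∀ a₁ a₂ b₁ b₂ : G, 0 ≤ a₁ → 0 ≤ a₂ → 0 ≤ b₁ → 0 ≤ b₂ → a₁ + a₂ = b₁ + b₂ →
    ∃ c₁₁ c₁₂ c₂₁ c₂₂ : G, 0 ≤ c₁₁ ∧ 0 ≤ c₁₂ ∧ 0 ≤ c₂₁ ∧ 0 ≤ c₂₂ ∧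
      a₁ = c₁₁ + c₁₂ ∧ a₂ = c₂₁ + c₂₂ ∧ b₁ = c₁₁ + c₂₁ ∧ b₂ = c₁₂ + c₂₂

/-- A poset is an antilattice if only comparable pairs of elements have a join or a meet. -/
def IsAntilattice (P : Type*) [PartialOrder P] : Prop :=
  ∀ a b : P, ((∃ c, IsLUB {a, b} c) ∨ (∃ c, IsGLB {a, b} c)) → (a ≤ b ∨ b ≤ a)

/-!
The direction `→` holds because `a ↦ (a, 0)` has the positive retraction `(a, g) ↦ a`, and
`{0} × G` is a convex subgroup of `A ×ₗ G`.

Conversely, let `(a₁, g₁) + (a₂, g₂) = (b₁, h₁) + (b₂, h₂)` with positive summands. If `a₁ < b₁`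
or `b₁ < a₁`, the first summands are comparable and the decomposition is trivial. Otherwise
`a₁ = b₁`, or `a₁, b₁` (and hence `a₂, b₂`) are incomparable. In the latter case `0` is not the meet
of `a₁, b₁` in the antilattice `A`, so by Riesz interpolation they have a strictly positive common
lower bound, and so do `a₂, b₂`; decomposing above these bounds gives a decomposition in `A` with
strictly positive diagonal. Either way a diagonal corner needs a positive `G`-coordinate only
where its `A`-coordinate vanishes, and such a decomposition in `G` comes from RDP after lowering
the diagonal corners to common lower bounds, which exist since `G` is directed.
-/

section Decomposition

variable {G : Type*} [AddGroup G] [PartialOrder G]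

theorem exists_decomp_of_le [AddLeftMono G] {a₁ a₂ b₁ b₂ : G}
    (ha₁ : 0 ≤ a₁) (hb₂ : 0 ≤ b₂) (hsum : a₁ + a₂ = b₁ + b₂) (hle : a₁ ≤ b₁) :
    ∃ c₁₁ c₁₂ c₂₁ c₂₂ : G, 0 ≤ c₁₁ ∧ 0 ≤ c₁₂ ∧ 0 ≤ c₂₁ ∧ 0 ≤ c₂₂ ∧
      a₁ = c₁₁ + c₁₂ ∧ a₂ = c₂₁ + c₂₂ ∧ b₁ = c₁₁ + c₂₁ ∧ b₂ = c₁₂ + c₂₂ :=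
  ⟨a₁, 0, -a₁ + b₁, b₂, ha₁, le_rfl, le_neg_add_iff_le.mpr hle, hb₂, (add_zero a₁).symm,
    by rw [add_assoc, ← hsum, neg_add_cancel_left], (add_neg_cancel_left a₁ b₁).symm,
    (zero_add b₂).symm⟩

theorem exists_decomp_of_ge [AddLeftMono G] {a₁ a₂ b₁ b₂ : G}
    (hb₁ : 0 ≤ b₁) (ha₂ : 0 ≤ a₂) (hsum : a₁ + a₂ = b₁ + b₂) (hge : b₁ ≤ a₁) :
    ∃ c₁₁ c₁₂ c₂₁ c₂₂ : G, 0 ≤ c₁₁ ∧ 0 ≤ c₁₂ ∧ 0 ≤ c₂₁ ∧ 0 ≤ c₂₂ ∧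
      a₁ = c₁₁ + c₁₂ ∧ a₂ = c₂₁ + c₂₂ ∧ b₁ = c₁₁ + c₂₁ ∧ b₂ = c₁₂ + c₂₂ := by
  obtain ⟨c₁₁, c₁₂, c₂₁, c₂₂, h₁₁, h₁₂, h₂₁, h₂₂, e₁, e₂, e₃, e₄⟩ :=
    exists_decomp_of_le hb₁ ha₂ hsum.symm hge
  exact ⟨c₁₁, c₂₁, c₁₂, c₂₂, h₁₁, h₂₁, h₁₂, h₂₂, e₃, e₄, e₁, e₂⟩

variable [AddLeftMono G] [AddRightMono G]

theorem RDP.exists_decomp_of_lowerBounds (hG : RDP G) {a₁ a₂ b₁ b₂ u v : G}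
    (hsum : a₁ + a₂ = b₁ + b₂) (hua : u ≤ a₁) (hub : u ≤ b₁) (hva : v ≤ a₂) (hvb : v ≤ b₂) :
    ∃ c₁₁ c₁₂ c₂₁ c₂₂ : G, u ≤ c₁₁ ∧ 0 ≤ c₁₂ ∧ 0 ≤ c₂₁ ∧ v ≤ c₂₂ ∧
      a₁ = c₁₁ + c₁₂ ∧ a₂ = c₂₁ + c₂₂ ∧ b₁ = c₁₁ + c₂₁ ∧ b₂ = c₁₂ + c₂₂ := by
  have hsum' : (-u + a₁) + (a₂ + -v) = (-u + b₁) + (b₂ + -v) := by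
    rw [add_assoc, ← add_assoc a₁, hsum]
    simp only [add_assoc]
  obtain ⟨e₁₁, e₁₂, e₂₁, e₂₂, h₁₁, h₁₂, h₂₁, h₂₂, e₁, e₂, e₃, e₄⟩ :=
    hG _ _ _ _ (le_neg_add_iff_le.mpr hua) (le_add_neg_iff_le.mpr hva)
      (le_neg_add_iff_le.mpr hub) (le_add_neg_iff_le.mpr hvb) hsum'
  refine ⟨u + e₁₁, e₁₂, e₂₁, e₂₂ + v, le_add_of_nonneg_right h₁₁, h₁₂, h₂₁,
    le_add_of_nonneg_left h₂₂, ?_, ?_, ?_, ?_⟩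
  · rw [add_assoc, ← e₁, add_neg_cancel_left]
  · rw [← add_assoc, ← e₂, neg_add_cancel_right]
  · rw [add_assoc, ← e₃, add_neg_cancel_left]
  · rw [← add_assoc, ← e₄, neg_add_cancel_right]

theorem RDP.exists_decomp_of_directed (hG : RDP G) (hdir : ∀ x y : G, ∃ z, x ≤ z ∧ y ≤ z)
    {g₁ g₂ h₁ h₂ : G} (hsum : g₁ + g₂ = h₁ + h₂) :
    ∃ d₁₁ d₁₂ d₂₁ d₂₂ : G, (0 ≤ g₁ → 0 ≤ h₁ → 0 ≤ d₁₁) ∧ 0 ≤ d₁₂ ∧ 0 ≤ d₂₁ ∧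
      (0 ≤ g₂ → 0 ≤ h₂ → 0 ≤ d₂₂) ∧
      g₁ = d₁₁ + d₁₂ ∧ g₂ = d₂₁ + d₂₂ ∧ h₁ = d₁₁ + d₂₁ ∧ h₂ = d₁₂ + d₂₂ := by
  have lowerBound (x y : G) : ∃ w, w ≤ x ∧ w ≤ y ∧ (0 ≤ x → 0 ≤ y → 0 ≤ w) := by
    by_cases hxy : 0 ≤ x ∧ 0 ≤ y
    · exact ⟨0, hxy.1, hxy.2, fun _ _ => le_rfl⟩
    · obtain ⟨z, hxz, hyz⟩ := hdir (-x) (-y)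
      exact ⟨-z, neg_le.mp hxz, neg_le.mp hyz, fun hx hy => absurd ⟨hx, hy⟩ hxy⟩
  obtain ⟨u, hug, huh, hu⟩ := lowerBound g₁ h₁
  obtain ⟨v, hvg, hvh, hv⟩ := lowerBound g₂ h₂
  obtain ⟨d₁₁, d₁₂, d₂₁, d₂₂, h₁₁, h₁₂, h₂₁, h₂₂, e⟩ :=
    hG.exists_decomp_of_lowerBounds hsum hug huh hvg hvh
  exact ⟨d₁₁, d₁₂, d₂₁, d₂₂, fun hg hh => (hu hg hh).trans h₁₁, h₁₂, h₂₁,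
    fun hg hh => (hv hg hh).trans h₂₂, e⟩

theorem RDP.exists_interpolant (hG : RDP G) {x y t : G} (hx : 0 ≤ x) (hy : 0 ≤ y)
    (htx : t ≤ x) (hty : t ≤ y) : ∃ z, 0 ≤ z ∧ t ≤ z ∧ z ≤ x ∧ z ≤ y := by
  obtain ⟨c₁₁, c₁₂, c₂₁, c₂₂, h₁₁, h₁₂, h₂₁, h₂₂, e₁, e₂, e₃, e₄⟩ :=
    hG (x + -t) y x (-t + y) (le_add_neg_iff_le.mpr htx) hy hx (le_neg_add_iff_le.mpr hty)
      (add_assoc x (-t) y)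
  have hc₂₁ : c₂₁ = c₁₂ + t := by
    rw [add_neg_eq_iff_eq_add, e₃, add_assoc] at e₁
    exact add_left_cancel e₁
  refine ⟨c₂₁, h₂₁, ?_, ?_, ?_⟩
  · rw [hc₂₁]; exact le_add_of_nonneg_left h₁₂
  · rw [e₃]; exact le_add_of_nonneg_left h₁₁
  · rw [e₂]; exact le_add_of_nonneg_right h₂₂

end Decomposition

section Antilattice

variable {A : Type*} [AddGroup A] [PartialOrder A] [AddLeftMono A] [AddRightMono A]

theorem IsAntilattice.exists_pos_le_le (hanti : IsAntilattice A) (hA : RDP A) {x y : A}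
    (hx : 0 ≤ x) (hy : 0 ≤ y) (hxy : ¬x ≤ y) (hyx : ¬y ≤ x) :
    ∃ z, 0 < z ∧ z ≤ x ∧ z ≤ y := by
  have hglb : ¬IsGLB {x, y} 0 := fun h => (hanti x y (Or.inr ⟨0, h⟩)).elim hxy hyx
  obtain ⟨t, htx, hty, ht⟩ : ∃ t, t ≤ x ∧ t ≤ y ∧ ¬t ≤ 0 := by
    by_contra! h
    exact hglb ⟨by simp [lowerBounds, hx, hy], fun t ht => h t (ht (by simp)) (ht (by simp))⟩
  obtain ⟨z, hz, htz, hzx, hzy⟩ := hA.exists_interpolant hx hy htx hty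
  exact ⟨z, hz.lt_of_ne fun h => ht (h ▸ htz), hzx, hzy⟩

theorem IsAntilattice.exists_decomp_of_incomparable (hanti : IsAntilattice A) (hA : RDP A)
    {a₁ a₂ b₁ b₂ : A} (ha₁ : 0 ≤ a₁) (ha₂ : 0 ≤ a₂) (hb₁ : 0 ≤ b₁) (hb₂ : 0 ≤ b₂)
    (hsum : a₁ + a₂ = b₁ + b₂) (hab : ¬a₁ ≤ b₁) (hba : ¬b₁ ≤ a₁) :
    ∃ c₁₁ c₁₂ c₂₁ c₂₂ : A, 0 < c₁₁ ∧ 0 ≤ c₁₂ ∧ 0 ≤ c₂₁ ∧ 0 < c₂₂ ∧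
      a₁ = c₁₁ + c₁₂ ∧ a₂ = c₂₁ + c₂₂ ∧ b₁ = c₁₁ + c₂₁ ∧ b₂ = c₁₂ + c₂₂ := by
  have hab₂ : ¬a₂ ≤ b₂ := fun h =>
    hba (le_of_add_le_add_right (hsum ▸ add_le_add_right h b₁ : b₁ + a₂ ≤ a₁ + a₂))
  have hba₂ : ¬b₂ ≤ a₂ := fun h =>
    hab (le_of_add_le_add_right (hsum ▸ add_le_add_right h a₁ : a₁ + b₂ ≤ b₁ + b₂))
  obtain ⟨u, hu, hua, hub⟩ := hanti.exists_pos_le_le hA ha₁ hb₁ hab hba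
  obtain ⟨v, hv, hva, hvb⟩ := hanti.exists_pos_le_le hA ha₂ hb₂ hab₂ hba₂
  obtain ⟨c₁₁, c₁₂, c₂₁, c₂₂, h₁₁, h₁₂, h₂₁, h₂₂, e⟩ :=
    hA.exists_decomp_of_lowerBounds hsum hua hub hva hvb
  exact ⟨c₁₁, c₁₂, c₂₁, c₂₂, hu.trans_le h₁₁, h₁₂, h₂₁, hv.trans_le h₂₂, e⟩

theorem IsAntilattice.exists_decomp_of_not_lt (hanti : IsAntilattice A) (hA : RDP A)
    {a₁ a₂ b₁ b₂ : A} (ha₁ : 0 ≤ a₁) (ha₂ : 0 ≤ a₂) (hb₁ : 0 ≤ b₁) (hb₂ : 0 ≤ b₂)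
    (hsum : a₁ + a₂ = b₁ + b₂) (hab : ¬a₁ < b₁) (hba : ¬b₁ < a₁) :
    ∃ c₁₁ c₁₂ c₂₁ c₂₂ : A, 0 ≤ c₁₁ ∧ (0 = c₁₁ → 0 = a₁ ∧ 0 = b₁) ∧ 0 ≤ c₁₂ ∧ 0 ≤ c₂₁ ∧
      0 ≤ c₂₂ ∧ (0 = c₂₂ → 0 = a₂ ∧ 0 = b₂) ∧
      a₁ = c₁₁ + c₁₂ ∧ a₂ = c₂₁ + c₂₂ ∧ b₁ = c₁₁ + c₂₁ ∧ b₂ = c₁₂ + c₂₂ := by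
  rcases eq_or_ne a₁ b₁ with rfl | hne
  · obtain rfl : a₂ = b₂ := add_left_cancel hsum
    exact ⟨a₁, 0, 0, a₂, ha₁, fun h => ⟨h, h⟩, le_rfl, le_rfl, ha₂, fun h => ⟨h, h⟩,
      (add_zero a₁).symm, (zero_add a₂).symm, (add_zero a₁).symm, (zero_add a₂).symm⟩
  · obtain ⟨c₁₁, c₁₂, c₂₁, c₂₂, h₁₁, h₁₂, h₂₁, h₂₂, e⟩ :=
      hanti.exists_decomp_of_incomparable hA ha₁ ha₂ hb₁ hb₂ hsum
        (fun h => hab (h.lt_of_ne hne)) (fun h => hba (h.lt_of_ne hne.symm))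
    exact ⟨c₁₁, c₁₂, c₂₁, c₂₂, h₁₁.le, fun h => absurd h h₁₁.ne, h₁₂, h₂₁, h₂₂.le,
      fun h => absurd h h₂₂.ne, e⟩

end Antilattice

instance Prod.Lex.addLeftMono {A G : Type*} [Add A] [Preorder A] [AddLeftStrictMono A] [Add G]
    [Preorder G] [AddLeftMono G] : AddLeftMono (A ×ₗ G) where
  elim c x y h := by
    obtain h | ⟨h₁, h₂⟩ := Prod.Lex.le_iff.mp h
    · exact Prod.Lex.le_iff.mpr (Or.inl (add_lt_add_right h (ofLex c).1))
    · exact Prod.Lex.le_iff.mpr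
        (Or.inr ⟨congrArg ((ofLex c).1 + ·) h₁, add_le_add_right h₂ (ofLex c).2⟩)

section Lex

variable {A G : Type*} [AddGroup A] [PartialOrder A] [AddGroup G] [PartialOrder G]

open Prod.Lex

theorem RDP.of_lex_left (h : RDP (A ×ₗ G)) : RDP A := by
  intro a₁ a₂ b₁ b₂ ha₁ ha₂ hb₁ hb₂ hsum
  have emb {a : A} (ha : 0 ≤ a) : (0 : A ×ₗ G) ≤ toLex (a, 0) :=
    toLex_le_toLex'.mpr ⟨ha, fun _ => le_rfl⟩
  obtain ⟨C₁₁, C₁₂, C₂₁, C₂₂, h₁₁, h₁₂, h₂₁, h₂₂, e₁, e₂, e₃, e₄⟩ :=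
    h _ _ _ _ (emb ha₁) (emb ha₂) (emb hb₁) (emb hb₂)
      (by rw [← toLex_add, ← toLex_add, Prod.mk_add_mk, Prod.mk_add_mk, hsum])
  exact ⟨_, _, _, _, monotone_fst _ _ h₁₁, monotone_fst _ _ h₁₂, monotone_fst _ _ h₂₁,
    monotone_fst _ _ h₂₂, congrArg (fun P => (ofLex P).1) e₁, congrArg (fun P => (ofLex P).1) e₂,
    congrArg (fun P => (ofLex P).1) e₃, congrArg (fun P => (ofLex P).1) e₄⟩

theorem RDP.of_lex_right [AddLeftMono A] [AddRightMono A] (h : RDP (A ×ₗ G)) : RDP G := by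
  intro g₁ g₂ h₁ h₂ hg₁ hg₂ hh₁ hh₂ hsum
  have emb {g : G} (hg : 0 ≤ g) : (0 : A ×ₗ G) ≤ toLex (0, g) :=
    toLex_le_toLex'.mpr ⟨le_rfl, fun _ => hg⟩
  obtain ⟨C₁₁, C₁₂, C₂₁, C₂₂, h₁₁, h₁₂, h₂₁, h₂₂, e₁, e₂, e₃, e₄⟩ :=
    h _ _ _ _ (emb hg₁) (emb hg₂) (emb hh₁) (emb hh₂)
      (by rw [← toLex_add, ← toLex_add, Prod.mk_add_mk, Prod.mk_add_mk, hsum])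
  have fst_eq_zero {C D : A ×ₗ G} (hC : 0 ≤ C) (hD : 0 ≤ D) (e : (ofLex (C + D)).1 = 0) :
      (ofLex C).1 = 0 ∧ (ofLex D).1 = 0 :=
    (add_eq_zero_iff_of_nonneg (monotone_fst _ _ hC) (monotone_fst _ _ hD)).mp e
  obtain ⟨z₁₁, z₁₂⟩ := fst_eq_zero h₁₁ h₁₂ (congrArg (fun P => (ofLex P).1) e₁).symm
  obtain ⟨z₂₁, z₂₂⟩ := fst_eq_zero h₂₁ h₂₂ (congrArg (fun P => (ofLex P).1) e₂).symm
  have snd_nonneg {C : A ×ₗ G} (hC : 0 ≤ C) (h0 : (ofLex C).1 = 0) : 0 ≤ (ofLex C).2 :=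
    (le_iff'.mp hC).2 h0.symm
  exact ⟨_, _, _, _, snd_nonneg h₁₁ z₁₁, snd_nonneg h₁₂ z₁₂, snd_nonneg h₂₁ z₂₁,
    snd_nonneg h₂₂ z₂₂, congrArg (fun P => (ofLex P).2) e₁, congrArg (fun P => (ofLex P).2) e₂,
    congrArg (fun P => (ofLex P).2) e₃, congrArg (fun P => (ofLex P).2) e₄⟩

theorem RDP.lex [AddLeftMono A] [AddRightMono A] [AddLeftMono G] [AddRightMono G]
    (hanti : IsAntilattice A) (hdir : ∀ x y : G, ∃ z, x ≤ z ∧ y ≤ z)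
    (hA : RDP A) (hG : RDP G) : RDP (A ×ₗ G) := by
  rintro ⟨a₁, g₁⟩ ⟨a₂, g₂⟩ ⟨b₁, h₁⟩ ⟨b₂, h₂⟩ hP₁ hP₂ hQ₁ hQ₂ hsum
  by_cases hab : a₁ < b₁
  · exact exists_decomp_of_le hP₁ hQ₂ hsum (toLex_le_toLex.mpr (Or.inl hab))
  by_cases hba : b₁ < a₁
  · exact exists_decomp_of_ge hQ₁ hP₂ hsum (toLex_le_toLex.mpr (Or.inl hba))
  obtain ⟨hsumA, hsumG⟩ := Prod.ext_iff.mp hsum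
  obtain ⟨ha₁, hg₁⟩ := toLex_le_toLex'.mp hP₁
  obtain ⟨ha₂, hg₂⟩ := toLex_le_toLex'.mp hP₂
  obtain ⟨hb₁, hh₁⟩ := toLex_le_toLex'.mp hQ₁
  obtain ⟨hb₂, hh₂⟩ := toLex_le_toLex'.mp hQ₂
  obtain ⟨c₁₁, c₁₂, c₂₁, c₂₂, hc₁₁, hc₁₁', hc₁₂, hc₂₁, hc₂₂, hc₂₂', ec₁, ec₂, ec₃, ec₄⟩ :=
    hanti.exists_decomp_of_not_lt hA ha₁ ha₂ hb₁ hb₂ hsumA hab hba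
  obtain ⟨d₁₁, d₁₂, d₂₁, d₂₂, hd₁₁, hd₁₂, hd₂₁, hd₂₂, ed₁, ed₂, ed₃, ed₄⟩ :=
    hG.exists_decomp_of_directed hdir hsumG
  have diag_nonneg {c a b : A} {d g h : G} (hc : 0 ≤ c) (hca : 0 = c → 0 = a ∧ 0 = b)
      (hd : 0 ≤ g → 0 ≤ h → 0 ≤ d) (hg : 0 = a → 0 ≤ g) (hh : 0 = b → 0 ≤ h) :
      (0 : A ×ₗ G) ≤ toLex (c, d) :=
    toLex_le_toLex'.mpr ⟨hc, fun h0 => hd (hg (hca h0).1) (hh (hca h0).2)⟩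
  exact ⟨toLex (c₁₁, d₁₁), toLex (c₁₂, d₁₂), toLex (c₂₁, d₂₁), toLex (c₂₂, d₂₂),
    diag_nonneg hc₁₁ hc₁₁' hd₁₁ hg₁ hh₁, toLex_le_toLex'.mpr ⟨hc₁₂, fun _ => hd₁₂⟩,
    toLex_le_toLex'.mpr ⟨hc₂₁, fun _ => hd₂₁⟩, diag_nonneg hc₂₂ hc₂₂' hd₂₂ hg₂ hh₂,
    Prod.ext ec₁ ed₁, Prod.ext ec₂ ed₂, Prod.ext ec₃ ed₃, Prod.ext ec₄ ed₄⟩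

end Lex

/-- If `A` is an antilattice po-group and `G` is a directed po-group, then
the lexicographic product `A ×ₗ G` satisfies RDP iff both `A` and `G` satisfy RDP. -/
theorem rdp_lex_iff_antilattice {A G : Type*}
    [AddGroup A] [PartialOrder A]
    [CovariantClass A A (· + ·) (· ≤ ·)]
    [CovariantClass A A (Function.swap (· + ·)) (· ≤ ·)]
    [AddGroup G] [PartialOrder G]
    [CovariantClass G G (· + ·) (· ≤ ·)]
    [CovariantClass G G (Function.swap (· + ·)) (· ≤ ·)]
    (hanti : IsAntilattice A)
    (hdir : ∀ x y : G, ∃ z : G, x ≤ z ∧ y ≤ z) :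
    RDP (A ×ₗ G) ↔ RDP A ∧ RDP G :=
  ⟨fun h => ⟨h.of_lex_left, h.of_lex_right⟩, fun ⟨hA, hG⟩ => RDP.lex hanti hdir hA hG⟩
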